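/- Let L/K be a field extension, n a positive integer, R = K[x] the polynomial ring in one variable, S = L[x_1,…,x_n], and R → S the ring map extending K ⊆ L and sending x to x_1. Then S is free as an R-module, and S is a content R-algebra if and only if K is algebraically closed in L. -/

import Mathlib

section OhmRushDefs

variable {R S : Type*} [CommRing R] [CommRing S]

/-- The Ohm–Rush content of an element `s` of an `R`-algebra `S` (given by a ring
homomorphism `f : R →+* S`): the intersection of all ideals `I` of `R` with `s ∈ IS`. -/
def ORContent (f : R →+* S) (s : S) : Ideal R :=
  sInf {I : Ideal R | s ∈ Ideal.map f I}

/-- `S` is an Ohm–Rush `R`-algebra if every `s ∈ S` lies in the extension of its content. -/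
def IsOhmRushAlgebra (f : R →+* S) : Prop :=
  ∀ s : S, s ∈ Ideal.map f (ORContent f s)

/-- Flatness of a ring homomorphism. -/
def RingHomFlat (f : R →+* S) : Prop :=
  letI := f.toAlgebra; Module.Flat R S

/-- Faithful flatness of a ring homomorphism. -/
def RingHomFaithfullyFlat (f : R →+* S) : Prop :=
  letI := f.toAlgebra; Module.FaithfullyFlat R S

/-- Module-freeness of a ring homomorphism. -/
def RingHomFree (f : R →+* S) : Prop :=
  letI := f.toAlgebra; Module.Free R S

/-- Weak content algebra: Ohm–Rush and `√c(fg) = √(c(f)c(g))`. -/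
def IsWeakContentAlgebra (f : R →+* S) : Prop :=
  IsOhmRushAlgebra f ∧ ∀ s t : S,
    (ORContent f (s * t)).radical = (ORContent f s * ORContent f t).radical

/-- Semicontent algebra: faithfully flat Ohm–Rush, and for every multiplicative subset `W`
of `R`, if `c(s)R_W = R_W` then `c(st)R_W = c(t)R_W`. -/
def IsSemicontentAlgebra (f : R →+* S) : Prop :=
  IsOhmRushAlgebra f ∧ RingHomFaithfullyFlat f ∧
    ∀ (W : Submonoid R) (s t : S),
      Ideal.map (algebraMap R (Localization W)) (ORContent f s) = ⊤ →
      Ideal.map (algebraMap R (Localization W)) (ORContent f (s * t)) =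
        Ideal.map (algebraMap R (Localization W)) (ORContent f t)

/-- Content algebra: faithfully flat Ohm–Rush satisfying the Dedekind–Mertens type formula. -/
def IsContentAlgebra (f : R →+* S) : Prop :=
  IsOhmRushAlgebra f ∧ RingHomFaithfullyFlat f ∧
    ∀ s t : S, ∃ n : ℕ, 0 < n ∧
      ORContent f s ^ n * ORContent f t = ORContent f s ^ (n - 1) * ORContent f (s * t)

/-- A ring homomorphism satisfies INC if comparable primes of `S` with the same
contraction to `R` are equal. -/
def SatisfiesINC (f : R →+* S) : Prop :=
  ∀ Q Q' : Ideal S, Q.IsPrime → Q'.IsPrime → Q ≤ Q' →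
    Ideal.comap f Q = Ideal.comap f Q' → Q = Q'

/-- A valuation domain: a domain whose divisibility is total. -/
def IsValuationDomain (A : Type*) [CommRing A] : Prop :=
  IsDomain A ∧ ∀ a b : A, ∃ c : A, a * c = b ∨ b * c = a

/-- A Prüfer domain: a domain whose localization at every maximal ideal is a
valuation domain. -/
def IsPruferDomain (A : Type*) [CommRing A] : Prop :=
  IsDomain A ∧ ∀ (P : Ideal A) (hP : P.IsMaximal),
    haveI := hP.isPrime
    IsValuationDomain (Localization.AtPrime P)

end OhmRushDefs

/-!
Via `x₁ ↦ X`, `L[x₁, …, xₙ]` is `L[X][x₂, …, xₙ]`, a free `K[X]`-algebra. Over a principal ideal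
domain the content of an element of a free algebra is the ideal generated by its coordinates, so
every `s` factors as `a • s'` with `c(s) = (a)` and `c(s') = 1`. If every maximal ideal of the base
extends to a prime ideal, then `c(s' t') = 1` for two such `s'`, `t'`, so the content is
multiplicative. When `K` is algebraically closed in `L`, an irreducible `p ∈ K[X]` stays
irreducible in `L[X]` (the coefficients of its monic factors are integral over `K`), hence stays
prime in `L[X][x₂, …, xₙ]`.

Conversely, setting `x₂ = ⋯ = xₙ = 0` reduces to `L[X]`. If `θ ∈ L \ K` is algebraic with minimal
polynomial `p = (X - θ) q`, then `c(X - θ) = 1` because a linear polynomial over `L` divisible by a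
nonunit of `K[X]` has its root in `K`. The content formula then gives `c(q) = c(p) = (p)`, so
`p ∣ q`, which is impossible for degree reasons.
-/

open Polynomial

section Content

variable {R S T : Type*} [CommRing R] [CommRing S] [CommRing T] {f : R →+* S}

theorem orContent_le_of_mem {s : S} {I : Ideal R} (h : s ∈ I.map f) : ORContent f s ≤ I :=
  sInf_le h

variable (f) in
theorem orContent_zero : ORContent f 0 = ⊥ :=
  le_bot_iff.mp (orContent_le_of_mem (zero_mem _))

theorem IsOhmRushAlgebra.mem_map_of_orContent_le (hf : IsOhmRushAlgebra f) {s : S}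
    {I : Ideal R} (h : ORContent f s ≤ I) : s ∈ I.map f :=
  Ideal.map_mono h (hf s)

theorem mem_map_span_singleton_iff_dvd {r : R} {s : S} :
    s ∈ (Ideal.span {r}).map f ↔ f r ∣ s := by
  rw [Ideal.map_span, Set.image_singleton, Ideal.mem_span_singleton]

theorem mem_map_iff_of_leftInverse {g : S →+* T} {ψ : T →+* S}
    (hψ : Function.LeftInverse ψ g) (J : Ideal S) (s : S) : g s ∈ J.map g ↔ s ∈ J := by
  refine ⟨fun h => ?_, Ideal.mem_map_of_mem g⟩
  have h' := Ideal.mem_map_of_mem ψ h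
  rwa [Ideal.map_map, show ψ.comp g = RingHom.id S from RingHom.ext hψ, Ideal.map_id, hψ] at h'

theorem orContent_comp_of_leftInverse {g : S →+* T} {ψ : T →+* S}
    (hψ : Function.LeftInverse ψ g) (s : S) : ORContent (g.comp f) (g s) = ORContent f s := by
  simp only [ORContent, ← Ideal.map_map, mem_map_iff_of_leftInverse hψ]

theorem IsOhmRushAlgebra.orContent_mul_eq_top (hf : IsOhmRushAlgebra f)
    (hmax : ∀ M : Ideal R, M.IsMaximal → (M.map f).IsPrime) {s t : S}
    (hs : ORContent f s = ⊤) (ht : ORContent f t = ⊤) : ORContent f (s * t) = ⊤ := by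
  by_contra hne
  obtain ⟨M, hM, hle⟩ := Ideal.exists_le_maximal _ hne
  have hmem (u : S) (hu : ORContent f u = ⊤) : u ∉ M.map f := fun h =>
    hM.ne_top (top_le_iff.mp (hu ▸ orContent_le_of_mem h))
  rcases (hmax M hM).mem_or_mem (hf.mem_map_of_orContent_le hle) with h | h
  exacts [hmem s hs h, hmem t ht h]

theorem IsContentAlgebra.orContent_mul_of_orContent_eq_top (h : IsContentAlgebra f)
    {s : S} (hs : ORContent f s = ⊤) (t : S) : ORContent f (s * t) = ORContent f t := by
  obtain ⟨n, -, hn⟩ := h.2.2 s t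
  simpa only [hs, Ideal.top_pow, Ideal.top_mul] using hn.symm

theorem IsContentAlgebra.of_comp_of_leftInverse {g : S →+* T} {ψ : T →+* S}
    (hψ : Function.LeftInverse ψ g) (h : IsContentAlgebra (g.comp f))
    (hff : RingHomFaithfullyFlat f) : IsContentAlgebra f := by
  obtain ⟨hOR, -, hDM⟩ := h
  refine ⟨fun s => ?_, hff, fun s t => ?_⟩
  · have hs := hOR (g s)
    rwa [orContent_comp_of_leftInverse hψ, ← Ideal.map_map, mem_map_iff_of_leftInverse hψ] at hs
  · simpa only [← map_mul, orContent_comp_of_leftInverse hψ] using hDM (g s) (g t)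

end Content

section RingEquiv

variable {R S T : Type*} [CommRing R] [CommRing S] [CommRing T] {f : R →+* S} (e : S ≃+* T)

theorem RingHomFree.ringEquiv_comp (h : RingHomFree f) : RingHomFree ((e : S →+* T).comp f) :=
  letI := f.toAlgebra
  letI := ((e : S →+* T).comp f).toAlgebra
  haveI : Module.Free R S := h
  Module.Free.of_equiv (AlgEquiv.ofRingEquiv (f := e) fun _ => rfl).toLinearEquiv

theorem RingHomFree.ringHomFaithfullyFlat [Nontrivial S] (h : RingHomFree f) :
    RingHomFaithfullyFlat f :=
  letI := f.toAlgebra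
  haveI : Module.Free R S := h
  inferInstanceAs (Module.FaithfullyFlat R S)

theorem isContentAlgebra_ringEquiv_comp_iff [Nontrivial S] (hf : RingHomFree f) :
    IsContentAlgebra ((e : S →+* T).comp f) ↔ IsContentAlgebra f := by
  have : Nontrivial T := e.injective.nontrivial
  refine ⟨fun h => h.of_comp_of_leftInverse (g := (e : S →+* T)) (ψ := (e.symm : T →+* S))
    e.symm_apply_apply hf.ringHomFaithfullyFlat, fun h => ?_⟩
  refine IsContentAlgebra.of_comp_of_leftInverse (g := (e.symm : T →+* S))
    (ψ := (e : S →+* T)) e.apply_symm_apply ?_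
    (hf.ringEquiv_comp e).ringHomFaithfullyFlat
  rwa [← RingHom.comp_assoc, RingEquiv.symm_comp, RingHom.id_comp]

end RingEquiv

section Free

variable {R S : Type*} [CommRing R] [CommRing S] [Algebra R S]

variable (R S) in
theorem ringHomFree_algebraMap [Module.Free R S] : RingHomFree (algebraMap R S) := by
  unfold RingHomFree
  rwa [toAlgebra_algebraMap]

variable {ι : Type*} (b : Module.Basis ι R S)

theorem mem_map_algebraMap_iff_forall_repr_mem {I : Ideal R} {s : S} :
    s ∈ I.map (algebraMap R S) ↔ ∀ i, b.repr s i ∈ I := by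
  rw [← Submodule.restrictScalars_mem R, ← Ideal.smul_top_eq_map]
  refine ⟨fun h i => ?_, fun h => ?_⟩
  · refine Submodule.smul_induction_on h (fun r hr t _ => ?_) fun x y hx hy => ?_
    · simpa only [map_smul, Finsupp.smul_apply, smul_eq_mul] using I.mul_mem_right _ hr
    · simpa only [map_add, Finsupp.add_apply] using I.add_mem hx hy
  · rw [← b.linearCombination_repr s, Finsupp.linearCombination_apply]
    exact Submodule.sum_mem _ fun i _ => Submodule.smul_mem_smul (h i) Submodule.mem_top

theorem orContent_eq_span_range_repr (s : S) :
    ORContent (algebraMap R S) s = Ideal.span (Set.range (b.repr s)) := by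
  refine le_antisymm (orContent_le_of_mem ?_) (le_sInf fun I hI => ?_)
  · exact (mem_map_algebraMap_iff_forall_repr_mem b).mpr fun i => Ideal.subset_span ⟨i, rfl⟩
  · exact Ideal.span_le.mpr <|
      Set.range_subset_iff.mpr ((mem_map_algebraMap_iff_forall_repr_mem b).mp hI)

variable [Module.Free R S]

variable (R S) in
theorem isOhmRushAlgebra_algebraMap : IsOhmRushAlgebra (algebraMap R S) := fun s => by
  let b := Module.Free.chooseBasis R S
  rw [mem_map_algebraMap_iff_forall_repr_mem b, orContent_eq_span_range_repr b]
  exact fun i => Ideal.subset_span ⟨i, rfl⟩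

theorem orContent_algebraMap_mul (r : R) (s : S) :
    ORContent (algebraMap R S) (algebraMap R S r * s) =
      Ideal.span {r} * ORContent (algebraMap R S) s := by
  let b := Module.Free.chooseBasis R S
  rw [orContent_eq_span_range_repr b, orContent_eq_span_range_repr b, ← Algebra.smul_def,
    map_smul, Ideal.span_mul_span', Set.singleton_mul, ← Set.range_comp]
  rfl

end Free

section PrincipalIdealDomain

variable {R S : Type*} [CommRing R] [IsDomain R] [IsPrincipalIdealRing R] [CommRing S]
  [Algebra R S] [Module.Free R S]

variable (R) in
theorem exists_eq_algebraMap_mul_orContent_eq_top {s : S} (hs : s ≠ 0) :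
    ∃ (a : R) (s' : S), s = algebraMap R S a * s' ∧
      ORContent (algebraMap R S) s = Ideal.span {a} ∧ ORContent (algebraMap R S) s' = ⊤ := by
  obtain ⟨a, ha⟩ := (IsPrincipalIdealRing.principal (ORContent (algebraMap R S) s)).principal
  rw [Ideal.submodule_span_eq] at ha
  obtain ⟨s', rfl⟩ :=
    mem_map_span_singleton_iff_dvd.mp (ha ▸ isOhmRushAlgebra_algebraMap R S s)
  have ha0 : a ≠ 0 := by
    rintro rfl
    exact hs (by rw [map_zero, zero_mul])
  refine ⟨a, s', rfl, ha, ?_⟩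
  rw [orContent_algebraMap_mul] at ha
  exact (Ideal.span_singleton_mul_right_inj ha0).mp (ha.trans (Ideal.mul_top _).symm)

theorem orContent_mul
    (hmax : ∀ M : Ideal R, M.IsMaximal → (M.map (algebraMap R S)).IsPrime) (s t : S) :
    ORContent (algebraMap R S) (s * t) =
      ORContent (algebraMap R S) s * ORContent (algebraMap R S) t := by
  rcases eq_or_ne s 0 with rfl | hs
  · rw [zero_mul, orContent_zero, Ideal.bot_mul]
  rcases eq_or_ne t 0 with rfl | ht
  · rw [mul_zero, orContent_zero, Ideal.mul_bot]
  obtain ⟨a, s', rfl, hcs, hcs'⟩ := exists_eq_algebraMap_mul_orContent_eq_top R hs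
  obtain ⟨b, t', rfl, hct, hct'⟩ := exists_eq_algebraMap_mul_orContent_eq_top R ht
  have hst' := (isOhmRushAlgebra_algebraMap R S).orContent_mul_eq_top hmax hcs' hct'
  rw [hcs, hct, mul_mul_mul_comm, ← map_mul, orContent_algebraMap_mul, hst', Ideal.mul_top,
    Ideal.span_singleton_mul_span_singleton]

theorem isContentAlgebra_algebraMap [Nontrivial S]
    (hmax : ∀ M : Ideal R, M.IsMaximal → (M.map (algebraMap R S)).IsPrime) :
    IsContentAlgebra (algebraMap R S) :=
  ⟨isOhmRushAlgebra_algebraMap R S, (ringHomFree_algebraMap R S).ringHomFaithfullyFlat,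
    fun s t => ⟨1, one_pos, by rw [pow_one, pow_zero, Ideal.one_eq_top, Ideal.top_mul,
      orContent_mul hmax]⟩⟩

end PrincipalIdealDomain

attribute [local instance] Polynomial.algebra

section PolynomialAlgebra

variable {K A : Type*} [Field K] [CommRing A] [Algebra K A]

instance : Module.Free K[X] A[X] :=
  (Algebra.IsPushout.out (R := K) (S := K[X]) (R' := A) (S' := A[X])).free

variable [IsDomain A]

theorem mem_range_of_map_dvd_X_sub_C {r : K[X]} (hr : ¬IsUnit r) {a : A}
    (hdvd : r.map (algebraMap K A) ∣ X - C a) : a ∈ (algebraMap K A).range := by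
  have hr0 : r ≠ 0 := by
    rintro rfl
    exact X_sub_C_ne_zero a (zero_dvd_iff.mp (by simpa using hdvd))
  have hdeg : r.natDegree = 1 := by
    refine le_antisymm ?_
      (natDegree_pos_iff_degree_pos.mpr (degree_pos_of_ne_zero_of_nonunit hr0 hr))
    simpa [natDegree_map_eq_of_injective (algebraMap K A).injective] using
      natDegree_le_of_dvd hdvd (X_sub_C_ne_zero a)
  obtain ⟨k, hk⟩ := exists_root_of_degree_eq_one ((degree_eq_iff_natDegree_eq hr0).mpr hdeg)
  have hroot := eval_eq_zero_of_dvd_of_eval_eq_zero hdvd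
    (by rw [eval_map_algebraMap, aeval_algebraMap_apply_eq_algebraMap_eval, hk.eq_zero, map_zero])
  exact ⟨k, sub_eq_zero.mp (by simpa using hroot)⟩

theorem orContent_X_sub_C_eq_top {a : A} (ha : a ∉ (algebraMap K A).range) :
    ORContent (algebraMap K[X] A[X]) (X - C a) = ⊤ := by
  by_contra hne
  obtain ⟨M, hM, hle⟩ := Ideal.exists_le_maximal _ hne
  obtain ⟨r, rfl⟩ := (IsPrincipalIdealRing.principal M).principal
  rw [Ideal.submodule_span_eq] at hM hle
  have hdvd := mem_map_span_singleton_iff_dvd.mp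
    ((isOhmRushAlgebra_algebraMap K[X] A[X]).mem_map_of_orContent_le hle)
  exact ha (mem_range_of_map_dvd_X_sub_C
    (fun hu => hM.ne_top (Ideal.span_singleton_eq_top.mpr hu)) hdvd)

theorem IsContentAlgebra.mem_range_of_isIntegral (h : IsContentAlgebra (algebraMap K[X] A[X]))
    {a : A} (ha : IsIntegral K a) : a ∈ (algebraMap K A).range := by
  by_contra hne
  have hp : (minpoly K a).Monic := minpoly.monic ha
  have hfactor : (X - C a) * ((minpoly K a).map (algebraMap K A) /ₘ (X - C a)) =
      (minpoly K a).map (algebraMap K A) :=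
    mul_divByMonic_eq_iff_isRoot.mpr (by rw [IsRoot, eval_map_algebraMap, minpoly.aeval])
  set q := (minpoly K a).map (algebraMap K A) /ₘ (X - C a)
  have hcq : ORContent (algebraMap K[X] A[X]) q ≤ Ideal.span {minpoly K a} := by
    rw [← h.orContent_mul_of_orContent_eq_top (orContent_X_sub_C_eq_top hne), hfactor]
    exact orContent_le_of_mem
      ((mem_map_span_singleton_iff_dvd (f := algebraMap K[X] A[X])).mpr dvd_rfl)
  have hdvd : (minpoly K a).map (algebraMap K A) ∣ q :=
    (mem_map_span_singleton_iff_dvd (f := algebraMap K[X] A[X])).mp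
      (h.1.mem_map_of_orContent_le hcq)
  have hq0 : q ≠ 0 := right_ne_zero_of_mul (hfactor ▸ (hp.map _).ne_zero)
  have hqdeg : q.natDegree = (minpoly K a).natDegree - 1 := by
    rw [natDegree_divByMonic _ (monic_X_sub_C a), hp.natDegree_map, natDegree_X_sub_C]
  have hle := natDegree_le_of_dvd hdvd hq0
  rw [hp.natDegree_map] at hle
  have := minpoly.natDegree_pos ha
  omega

end PolynomialAlgebra

section MvPolynomialOverPolynomial

variable {K L : Type*} [Field K] [Field L] [Algebra K L]

theorem Polynomial.Monic.mem_lifts_of_dvd_map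
    (halg : ∀ x : L, IsAlgebraic K x → x ∈ (algebraMap K L).range) {p : K[X]} (hp : p.Monic)
    {w : L[X]} (hw : w.Monic) (hdvd : w ∣ p.map (algebraMap K L)) :
    w ∈ lifts (algebraMap K L) := by
  refine (lifts_iff_coeff_lifts w).mpr fun n => ?_
  obtain ⟨c, hc⟩ := (lifts_iff_coeff_lifts w).mp
    (integralClosure.mem_lifts_of_monic_of_dvd_map L hp hw hdvd) n
  exact halg _ (hc ▸ c.2.isAlgebraic)

theorem Irreducible.map_algebraMap_of_forall_mem_range
    (halg : ∀ x : L, IsAlgebraic K x → x ∈ (algebraMap K L).range) {p : K[X]}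
    (hirr : Irreducible p) : Irreducible (p.map (algebraMap K L)) := by
  classical
  wlog hp : p.Monic generalizing p
  · exact ((associated_normalize p).map (mapRingHom (algebraMap K L))).irreducible_iff.mpr
      (this ((associated_normalize p).irreducible hirr) (monic_normalize hirr.ne_zero))
  have hinj := map_injective _ (algebraMap K L).injective
  refine (hp.map _).irreducible_iff_natDegree.mpr ⟨fun h1 => ?_, fun f g hf hg hfg => ?_⟩
  · exact hirr.not_isUnit (hinj (h1.trans (Polynomial.map_one _).symm) ▸ isUnit_one)
  obtain ⟨f₀, rfl⟩ :=
    (mem_lifts f).mp (hp.mem_lifts_of_dvd_map halg hf (hfg ▸ dvd_mul_right f g))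
  obtain ⟨g₀, rfl⟩ :=
    (mem_lifts g).mp (hp.mem_lifts_of_dvd_map halg hg (hfg ▸ dvd_mul_left g _))
  rw [← Polynomial.map_mul] at hfg
  simpa only [natDegree_map] using (hp.irreducible_iff_natDegree.mp hirr).2 f₀ g₀
    (monic_map_iff.mp hf) (monic_map_iff.mp hg) (hinj hfg)

theorem isPrime_map_algebraMap_mvPolynomial (σ : Type*)
    (halg : ∀ x : L, IsAlgebraic K x → x ∈ (algebraMap K L).range) {M : Ideal K[X]}
    (hM : M.IsMaximal) : (M.map (algebraMap K[X] (MvPolynomial σ L[X]))).IsPrime := by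
  obtain ⟨p, rfl⟩ := (IsPrincipalIdealRing.principal M).principal
  rw [Ideal.submodule_span_eq] at hM ⊢
  have hp0 : p ≠ 0 := by
    rintro rfl
    rw [Ideal.span_singleton_eq_bot.mpr rfl, ← Ring.isField_iff_maximal_bot] at hM
    exact Polynomial.not_isField K hM
  have hpL := 
    (Ideal.irreducible_of_isMaximal_span_singleton hp0 hM).map_algebraMap_of_forall_mem_range halg
  rw [Ideal.map_span, Set.image_singleton, IsScalarTower.algebraMap_apply K[X] L[X],
    MvPolynomial.algebraMap_eq, Ideal.span_singleton_prime (by simpa using hpL.ne_zero)]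
  exact (MvPolynomial.prime_C_iff σ).mpr hpL.prime

instance (σ : Type*) : Module.Free K[X] (MvPolynomial σ L[X]) := .trans (S := L[X])

theorem isContentAlgebra_mvPolynomial_iff (σ : Type*) :
    IsContentAlgebra (algebraMap K[X] (MvPolynomial σ L[X])) ↔
      ∀ x : L, IsAlgebraic K x → x ∈ (algebraMap K L).range := by
  refine ⟨fun h x hx => ?_, fun halg =>
    isContentAlgebra_algebraMap fun M hM => isPrime_map_algebraMap_mvPolynomial σ halg hM⟩
  rw [IsScalarTower.algebraMap_eq K[X] L[X], MvPolynomial.algebraMap_eq] at h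
  have hL := h.of_comp_of_leftInverse (g := MvPolynomial.C) (ψ := MvPolynomial.constantCoeff)
    (MvPolynomial.constantCoeff_C σ) (ringHomFree_algebraMap K[X] L[X]).ringHomFaithfullyFlat
  exact hL.mem_range_of_isIntegral hx.isIntegral

end MvPolynomialOverPolynomial

/-- For a field extension `L/K` and `n ≥ 1`, the map
`K[x] → L[x₁,…,xₙ]`, `x ↦ x₁`, makes `L[x₁,…,xₙ]` a free `K[x]`-module, and it is a
content algebra if and only if `K` is algebraically closed in `L`. -/
theorem polynomial_content_iff_algebraically_closed_in {K L : Type*} [Field K] [Field L]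
    [Algebra K L] (n : ℕ) (hn : 0 < n) :
    RingHomFree
      (Polynomial.eval₂RingHom
        ((MvPolynomial.C : L →+* MvPolynomial (Fin n) L).comp (algebraMap K L))
        (MvPolynomial.X ⟨0, hn⟩)) ∧
    (IsContentAlgebra
        (Polynomial.eval₂RingHom
          ((MvPolynomial.C : L →+* MvPolynomial (Fin n) L).comp (algebraMap K L))
          (MvPolynomial.X ⟨0, hn⟩)) ↔
      ∀ x : L, IsAlgebraic K x → x ∈ (algebraMap K L).range) := by
  obtain ⟨m, rfl⟩ : ∃ m, n = m + 1 := ⟨n - 1, by omega⟩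
  set φ := Polynomial.eval₂RingHom
    ((MvPolynomial.C : L →+* MvPolynomial (Fin (m + 1)) L).comp (algebraMap K L))
    (MvPolynomial.X ⟨0, hn⟩)
  let G : MvPolynomial (Fin (m + 1)) L ≃+* MvPolynomial (Fin m) L[X] :=
    ((MvPolynomial.renameEquiv L (finSuccEquiv m)).trans
      (MvPolynomial.optionEquivRight L (Fin m))).toRingEquiv
  have hG : (G : _ →+* _).comp φ = algebraMap K[X] (MvPolynomial (Fin m) L[X]) := by
    refine Polynomial.ringHom_ext (fun k => ?_) ?_ <;> simp [φ, G, MvPolynomial.algebraMap_eq]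
  have hfree : RingHomFree φ := by
    have := (ringHomFree_algebraMap K[X] (MvPolynomial (Fin m) L[X])).ringEquiv_comp G.symm
    rwa [← hG, ← RingHom.comp_assoc, RingEquiv.symm_comp, RingHom.id_comp] at this
  refine ⟨hfree, ?_⟩
  rw [← isContentAlgebra_ringEquiv_comp_iff G hfree, hG]
  exact isContentAlgebra_mvPolynomial_iff (Fin m)
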